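/- In the suffix-trie relabelling construction, if node u receives label i and node v receives label j with u a strict ancestor of v, then i < j. -/

import Mathlib

/-!
Label `k + 1` goes to the shortest prefix of `S[k..]` not labelled before, so every strict prefix
of that node already carries a label `≤ k`; this holds for every string. The unique terminator
makes the suffix `S[k..]` a prefix of no earlier suffix, so it is still unlabelled at step `k + 1`;
hence each step labels a fresh node and every node carries a single label, which must then be the
smaller one found above.
-/

/-- The suffix-trie relabelling construction (see the paper): `trieAssign S i`
lists the nodes of the suffix trie of `S` that have received labels
`0, ..., i`; the root is pre-labelled `0`, and label `i` goes to the highest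
(shortest) unlabelled ancestor of the leaf of the suffix `S[i..n]` — i.e. the
shortest prefix of `S[i..n]` not yet labelled — or to the leaf itself if all
its ancestors are labelled. -/
def trieAssign {α : Type} [DecidableEq α] (S : List α) : ℕ → List (List α)
  | 0 => [([] : List α)]
  | i + 1 =>
    let prev := trieAssign S i
    prev ++ [(((S.drop i).inits).find? (fun p => decide (p ∉ prev))).getD (S.drop i)]

theorem drop_not_isPrefix_drop {α : Type} {T : List α} {c : α} (hc : c ∉ T) {k k' : ℕ}
    (hk : k ≤ T.length) (hk' : k' < k) : ¬ (T ++ [c]).drop k <+: (T ++ [c]).drop k' := by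
  rw [List.drop_append_of_le_length hk, List.drop_append_of_le_length (by omega),
    List.prefix_concat_iff]
  rintro (h | h)
  · have := congrArg List.length h
    simp only [List.length_append, List.length_drop, List.length_singleton] at this
    omega
  · exact hc (List.mem_of_mem_drop (h.subset (by simp)))

section

variable {α : Type} [DecidableEq α]

def highestUnlabelled (prev : List (List α)) (L : List α) : List α :=
  (L.inits.find? fun p => decide (p ∉ prev)).getD L

theorem trieAssign_succ (S : List α) (k : ℕ) :
    trieAssign S (k + 1) = trieAssign S k ++ [highestUnlabelled (trieAssign S k) (S.drop k)] :=
  rfl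

theorem highestUnlabelled_isPrefix (prev : List (List α)) (L : List α) :
    highestUnlabelled prev L <+: L := by
  unfold highestUnlabelled
  cases hfind : L.inits.find? fun p => decide (p ∉ prev) with
  | none => exact List.prefix_refl L
  | some v => exact (List.mem_inits v L).mp (List.mem_of_find?_eq_some hfind)

theorem highestUnlabelled_not_mem {prev : List (List α)} {L : List α} (hL : L ∉ prev) :
    highestUnlabelled prev L ∉ prev := by
  unfold highestUnlabelled
  cases hfind : L.inits.find? fun p => decide (p ∉ prev) with
  | none => exact hL
  | some v => simpa using List.find?_some hfind

theorem mem_of_isPrefix_highestUnlabelled {prev : List (List α)} {L u : List α}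
    (hu : u <+: highestUnlabelled prev L) (hne : u ≠ highestUnlabelled prev L) : u ∈ prev := by
  unfold highestUnlabelled at hu hne
  cases hfind : L.inits.find? fun p => decide (p ∉ prev) with
  | none =>
    rw [hfind, Option.getD_none] at hu
    simpa using List.find?_eq_none.mp hfind u ((List.mem_inits u L).mpr hu)
  | some v =>
    rw [hfind, Option.getD_some] at hu hne
    obtain ⟨-, i, hi, rfl, hbefore⟩ := List.find?_eq_some_iff_getElem.mp hfind
    rw [List.getElem_inits] at hu hne
    have hlt : u.length < i := by
      have := hu.length_le
      have := mt hu.eq_of_length hne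
      simp only [List.length_take] at *
      omega
    have hu_eq : u = L.take u.length := List.prefix_iff_eq_take.mp (hu.trans (List.take_prefix i L))
    simpa [List.getElem_inits, ← hu_eq] using hbefore u.length hlt

theorem length_trieAssign (S : List α) (m : ℕ) : (trieAssign S m).length = m + 1 := by
  induction m with
  | zero => rfl
  | succ k ih => simp [trieAssign_succ, ih]

theorem trieAssign_isPrefix_of_le (S : List α) {m n : ℕ} (h : m ≤ n) :
    trieAssign S m <+: trieAssign S n := by
  induction n, h using Nat.le_induction with
  | base => exact List.prefix_refl _
  | succ n _ ih => exact ih.trans (trieAssign_succ S n ▸ List.prefix_append _ _)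

theorem getElem?_trieAssign_of_le (S : List α) {i m n : ℕ} (hi : i ≤ m) (hm : m ≤ n) :
    (trieAssign S n)[i]? = (trieAssign S m)[i]? := by
  obtain ⟨t, ht⟩ := trieAssign_isPrefix_of_le S hm
  rw [← ht, List.getElem?_append_left (by rw [length_trieAssign]; omega)]

theorem getElem?_trieAssign_succ (S : List α) {k n : ℕ} (hk : k + 1 ≤ n) :
    (trieAssign S n)[k + 1]? = some (highestUnlabelled (trieAssign S k) (S.drop k)) := by
  rw [getElem?_trieAssign_of_le S le_rfl hk, trieAssign_succ,
    List.getElem?_append_right (by rw [length_trieAssign]), length_trieAssign]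
  simp

theorem exists_lt_getElem?_of_isPrefix (S : List α) {n j : ℕ} {u v : List α}
    (hv : (trieAssign S n)[j]? = some v) (huv : u <+: v) (hne : u ≠ v) :
    ∃ i < j, (trieAssign S n)[i]? = some u := by
  have hj : j < n + 1 := by simpa [length_trieAssign] using (List.getElem?_eq_some_iff.mp hv).1
  cases j with
  | zero =>
    rw [getElem?_trieAssign_of_le S le_rfl (Nat.zero_le n)] at hv
    obtain rfl : v = [] := (Option.some_inj.mp hv).symm
    exact absurd (List.prefix_nil.mp huv) hne
  | succ k =>
    rw [getElem?_trieAssign_succ S (by omega), Option.some_inj] at hv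
    subst hv
    obtain ⟨i, hi⟩ := List.mem_iff_getElem?.mp (mem_of_isPrefix_highestUnlabelled huv hne)
    have hik : i ≤ k := by simpa [length_trieAssign] using (List.getElem?_eq_some_iff.mp hi).1
    exact ⟨i, by omega, by rw [getElem?_trieAssign_of_le S hik (by omega), hi]⟩

theorem mem_trieAssign {S x : List α} {k : ℕ} (hx : x ∈ trieAssign S k) :
    x = [] ∨ ∃ k' < k, x <+: S.drop k' := by
  induction k with
  | zero => simpa [trieAssign] using hx
  | succ k ih =>
    rw [trieAssign_succ, List.mem_append, List.mem_singleton] at hx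
    rcases hx with hx | rfl
    · exact (ih hx).imp_right fun ⟨k', hk', hp⟩ => ⟨k', by omega, hp⟩
    · exact Or.inr ⟨k, by omega, highestUnlabelled_isPrefix _ _⟩

theorem drop_not_mem_trieAssign {T : List α} {c : α} (hc : c ∉ T) {k : ℕ} (hk : k ≤ T.length) :
    (T ++ [c]).drop k ∉ trieAssign (T ++ [c]) k := by
  intro hmem
  rcases mem_trieAssign hmem with hnil | ⟨k', hk', hp⟩
  · rw [List.drop_eq_nil_iff, List.length_append, List.length_singleton] at hnil
    omega
  · exact drop_not_isPrefix_drop hc hk hk' hp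

theorem trieAssign_nodup {T : List α} {c : α} (hc : c ∉ T) {m : ℕ} (hm : m ≤ T.length + 1) :
    (trieAssign (T ++ [c]) m).Nodup := by
  induction m with
  | zero => simp [trieAssign]
  | succ k ih =>
    rw [trieAssign_succ, ← List.concat_eq_append]
    exact (ih (by omega)).concat
      (highestUnlabelled_not_mem (drop_not_mem_trieAssign hc (by omega)))

end

/-- In the suffix-trie relabelling construction, if node `u`
receives label `i` and node `v` receives label `j` with `u` a strict ancestor
of `v` (a strict prefix of `v`'s path label), then `i < j`: along any
root-to-node path, labels strictly increase. -/
theorem trieAssign_heapOrder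
    {α : Type} [DecidableEq α]
    (S T : List α) (c : α) (hS : S = T ++ [c]) (hc : c ∉ T) :
    ∀ i j : ℕ, ∀ u v : List α,
      (trieAssign S S.length)[i]? = some u →
      (trieAssign S S.length)[j]? = some v →
      u <+: v → u ≠ v → i < j := by
  intro i j u v hu hv huv hne
  obtain ⟨i', hi'j, hi'⟩ := exists_lt_getElem?_of_isPrefix S hv huv hne
  have hnodup : (trieAssign S S.length).Nodup := hS ▸ trieAssign_nodup hc (by simp)
  have hi : i < (trieAssign S S.length).length := (List.getElem?_eq_some_iff.mp hu).1
  have : i = i' := (List.getElem?_inj hi hnodup).mp (hu.trans hi'.symm)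
  omega
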